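/- Let H be a Hilbert space, 𝔹 a closed convex subset of H, F : H → ℝ a convex function, and 𝕏 : H → ℝⁿ a linear operator. Let y ∈ ℝⁿ and let β̂ be a solution of the minimization problem β̂ ∈ argmin_{β ∈ 𝔹} ( ‖𝕏β − y‖_n² + F(β) ). Then for every β ∈ 𝔹 and every f ∈ ℝⁿ, writing ξ = y − f: ‖𝕏β̂ − f‖_n² − ‖𝕏β − f‖_n² ≤ (2/n) ξᵀ(𝕏(β̂ − β)) + F(β) − F(β̂) − ‖𝕏(β̂ − β)‖_n². -/

import Mathlib

/-!
Perturb the minimiser `β̂` towards `β` along the segment `β̂ + t (β - β̂)`, which stays in `𝔹`.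
Convexity of `F` bounds the change of the objective by
`t (2 ⟨𝕏β̂ - y, 𝕏(β - β̂)⟩_n + F β - F β̂) + t² ‖𝕏(β - β̂)‖_n²`; as this is `≥ 0` for all small
`t > 0`, the linear coefficient is nonnegative. Expanding `‖𝕏β - f‖_n² = ‖(𝕏β̂ - f) - 𝕏(β̂ - β)‖_n²`
turns this variational inequality into the claimed bound.
-/

open MeasureTheory Real

noncomputable def empNormSq {n : ℕ} (u : Fin n → ℝ) : ℝ := (∑ i, (u i)^2) / n

open Filter Topology

lemma nonneg_of_forall_nonneg_add_mul {a b : ℝ}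
    (h : ∀ t : ℝ, 0 < t → t ≤ 1 → 0 ≤ a + t * b) : 0 ≤ a := by
  have hlim : Tendsto (fun t : ℝ => a + t * b) (𝓝[>] 0) (𝓝 a) := by
    have : Tendsto (fun t : ℝ => a + t * b) (𝓝 0) (𝓝 (a + 0 * b)) :=
      tendsto_const_nhds.add (tendsto_id.mul_const b)
    simpa using this.mono_left nhdsWithin_le_nhds
  refine ge_of_tendsto hlim ?_
  filter_upwards [Ioc_mem_nhdsGT zero_lt_one] with t ht using h t ht.1 ht.2

section LeastSquares

variable {V E : Type*} [AddCommGroup V] [Module ℝ V]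
  [NormedAddCommGroup E] [InnerProductSpace ℝ E]
  {C : Set V} {F : V → ℝ} {A : V →ₗ[ℝ] E} {y : E} {c : ℝ} {x₀ : V}

theorem IsMinOn.leastSquares_variational_inequality
    (hmin : IsMinOn (fun x => c * ‖A x - y‖ ^ 2 + F x) C x₀)
    (hC : Convex ℝ C) (hF : ConvexOn ℝ C F) (hx₀ : x₀ ∈ C)
    {x : V} (hx : x ∈ C) :
    0 ≤ 2 * c * inner ℝ (A x₀ - y) (A (x - x₀)) + (F x - F x₀) := by
  refine nonneg_of_forall_nonneg_add_mul (b := c * ‖A (x - x₀)‖ ^ 2) fun t ht₀ ht₁ => ?_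
  have hseg : x₀ + t • (x - x₀) = (1 - t) • x₀ + t • x := by module
  have hmem : x₀ + t • (x - x₀) ∈ C := hC.add_smul_sub_mem hx₀ hx ⟨ht₀.le, ht₁⟩
  have hFseg : F (x₀ + t • (x - x₀)) ≤ F x₀ + t * (F x - F x₀) := by
    have := hF.2 hx₀ hx (by linarith : (0 : ℝ) ≤ 1 - t) ht₀.le (sub_add_cancel 1 t)
    rw [hseg]
    simp only [smul_eq_mul] at this
    linarith
  have hnorm : ‖A (x₀ + t • (x - x₀)) - y‖ ^ 2
      = ‖A x₀ - y‖ ^ 2 + t * (2 * inner ℝ (A x₀ - y) (A (x - x₀)))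
          + t ^ 2 * ‖A (x - x₀)‖ ^ 2 := by
    rw [map_add, map_smul, add_sub_right_comm, norm_add_sq_real, inner_smul_right, norm_smul,
      Real.norm_of_nonneg ht₀.le]
    ring
  have hval := hmin hmem
  simp only [Set.mem_ofPred_eq, hnorm] at hval
  have : 0 ≤ t * (2 * c * inner ℝ (A x₀ - y) (A (x - x₀)) + (F x - F x₀)
      + t * (c * ‖A (x - x₀)‖ ^ 2)) := by
    linear_combination hval + hFseg
  exact (mul_nonneg_iff_of_pos_left ht₀).1 this

theorem IsMinOn.leastSquares_basic_inequality
    (hmin : IsMinOn (fun x => c * ‖A x - y‖ ^ 2 + F x) C x₀)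
    (hC : Convex ℝ C) (hF : ConvexOn ℝ C F) (hx₀ : x₀ ∈ C)
    {x : V} (hx : x ∈ C) (f : E) :
    c * ‖A x₀ - f‖ ^ 2 - c * ‖A x - f‖ ^ 2 ≤
      2 * c * inner ℝ (y - f) (A (x₀ - x)) + F x - F x₀ - c * ‖A (x₀ - x)‖ ^ 2 := by
  have hopt := hmin.leastSquares_variational_inequality hC hF hx₀ hx
  have hres : A x₀ - y = (A x₀ - f) - (y - f) := by abel
  have hdir : A (x - x₀) = -A (x₀ - x) := by rw [← map_neg, neg_sub]
  have hfit : A x - f = (A x₀ - f) - A (x₀ - x) := by rw [map_sub]; abel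
  rw [hres, hdir, inner_neg_right, inner_sub_left] at hopt
  rw [hfit, norm_sub_sq_real (A x₀ - f)]
  linear_combination hopt

end LeastSquares

lemma empNormSq_eq_inv_mul_norm_sq {n : ℕ} (u : Fin n → ℝ) :
    empNormSq u = (n : ℝ)⁻¹ * ‖WithLp.toLp 2 u‖ ^ 2 := by
  simp [empNormSq, EuclideanSpace.norm_sq_eq, div_eq_inv_mul]

lemma sum_mul_eq_inner_toLp {n : ℕ} (u v : Fin n → ℝ) :
    ∑ i, u i * v i = inner ℝ (WithLp.toLp 2 u) (WithLp.toLp 2 v) := by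
  simp [PiLp.inner_apply, mul_comm]

theorem stmt1_general {H : Type*} [NormedAddCommGroup H] [InnerProductSpace ℝ H]
    {n : ℕ}
    (𝔹 : Set H) (hBconv : Convex ℝ 𝔹)
    (F : H → ℝ) (hF : ConvexOn ℝ Set.univ F)
    (𝕏 : H →ₗ[ℝ] (Fin n → ℝ))
    (y : Fin n → ℝ)
    (βhat : H) (hmem : βhat ∈ 𝔹)
    (hmin : ∀ β ∈ 𝔹, empNormSq (𝕏 βhat - y) + F βhat ≤ empNormSq (𝕏 β - y) + F β) :
    ∀ β ∈ 𝔹, ∀ f : Fin n → ℝ,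
      empNormSq (𝕏 βhat - f) - empNormSq (𝕏 β - f) ≤
        (2 / n) * (∑ i, (y - f) i * 𝕏 (βhat - β) i) + F β - F βhat
          - empNormSq (𝕏 (βhat - β)) := by
  intro β hβ f
  let A : H →ₗ[ℝ] EuclideanSpace ℝ (Fin n) :=
    (WithLp.linearEquiv 2 ℝ (Fin n → ℝ)).symm.toLinearMap ∘ₗ 𝕏
  have hA (x : H) : A x = WithLp.toLp 2 (𝕏 x) := rfl
  have hmin' : IsMinOn (fun x => (n : ℝ)⁻¹ * ‖A x - WithLp.toLp 2 y‖ ^ 2 + F x) 𝔹 βhat := by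
    intro β hβ
    simpa [hA, ← WithLp.toLp_sub, ← empNormSq_eq_inv_mul_norm_sq] using hmin β hβ
  have key := hmin'.leastSquares_basic_inequality hBconv (hF.subset (Set.subset_univ _) hBconv)
    hmem hβ (WithLp.toLp 2 f)
  simp only [hA, ← WithLp.toLp_sub, ← empNormSq_eq_inv_mul_norm_sq, ← sum_mul_eq_inner_toLp]
    at key
  linear_combination key

/-- Proposition 2: convexity argument.
If `β̂` minimizes `β ↦ ‖𝕏β − y‖_n² + F(β)` over the closed convex set `𝔹`, then for all
`β ∈ 𝔹` and all `f ∈ ℝⁿ`, with `ξ = y − f`,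
`‖𝕏β̂ − f‖_n² − ‖𝕏β − f‖_n² ≤ (2/n) ξᵀ(𝕏(β̂ − β)) + F(β) − F(β̂) − ‖𝕏(β̂ − β)‖_n²`. -/
theorem stmt1 {H : Type*} [NormedAddCommGroup H] [InnerProductSpace ℝ H] [CompleteSpace H]
    {n : ℕ}
    (𝔹 : Set H) (hBconv : Convex ℝ 𝔹) (hBclosed : IsClosed 𝔹)
    (F : H → ℝ) (hF : ConvexOn ℝ Set.univ F)
    (𝕏 : H →ₗ[ℝ] (Fin n → ℝ))
    (y : Fin n → ℝ)
    (βhat : H) (hmem : βhat ∈ 𝔹)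
    (hmin : ∀ β ∈ 𝔹, empNormSq (𝕏 βhat - y) + F βhat ≤ empNormSq (𝕏 β - y) + F β) :
    ∀ β ∈ 𝔹, ∀ f : Fin n → ℝ,
      empNormSq (𝕏 βhat - f) - empNormSq (𝕏 β - f) ≤
        (2 / n) * (∑ i, (y - f) i * 𝕏 (βhat - β) i) + F β - F βhat
          - empNormSq (𝕏 (βhat - β)) :=
  stmt1_general 𝔹 hBconv F hF 𝕏 y βhat hmem hmin
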